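/- For every irreducible fraction p/q with 0 < p/q < 1 and every k ≥ 5, the number of entries equal to k in the reduced degree sequence of G_{p/q} equals the number of entries equal to k+1 in the reduced degree sequence of G_{p/(p+q)}: m(k, p/q) = m(k+1, p/(p+q)). (Note p/(p+q) = F(p/q) with F(x) = x/(1+x), and p/(p+q) is irreducible.) -/

import Mathlib

/-- Symbols for paths in the Farey binary tree. -/
inductive LR
  | L
  | R
deriving DecidableEq

/-- One step in the Farey binary tree: update the current pair of fractions
(represented as pairs (numerator, denominator) of naturals). -/
def fareyStep : ((ℕ × ℕ) × (ℕ × ℕ)) → LR → ((ℕ × ℕ) × (ℕ × ℕ))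
  | ((a, b), (c, d)), LR.L => ((a, b), (a + c, b + d))
  | ((a, b), (c, d)), LR.R => ((a + c, b + d), (c, d))

/-- The final pair of fractions of a word: after reading the first symbol `L`
the current pair is (0/1, 1/1); the remaining symbols update it. -/
def finalPair (w : List LR) : (ℕ × ℕ) × (ℕ × ℕ) :=
  w.tail.foldl fareyStep ((0, 1), (1, 1))

/-- The value ⟨w⟩ of a word: the mediant of its final pair, as (numerator, denominator). -/
def value (w : List LR) : ℕ × ℕ :=
  ((finalPair w).1.1 + (finalPair w).2.1, (finalPair w).1.2 + (finalPair w).2.2)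

/-- A word over {L,R} is a Farey word when its first symbol is `L`. -/
def IsFareyWord (w : List LR) : Prop := w.head? = some LR.L

/-- Concatenation of degree sequences:
[a₁,…,a_s] ⊕ [b₁,…,b_t] = [a₁+1, a₂, …, a_{s−1}, a_s+b₁, b₂, …, b_{t−1}, b_t+1]. -/
def oplus (A B : List ℕ) : List ℕ :=
  (A.dropLast.modifyHead (· + 1)) ++ [A.getLastD 0 + B.headD 0] ++ B.tail.dropLast
    ++ [B.getLastD 0 + 1]

/-- Update of the pair (D(left ancestor), D(right ancestor)) of unreduced degree
sequences along one symbol. -/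
def degStep : (List ℕ × List ℕ) → LR → (List ℕ × List ℕ)
  | (A, B), LR.L => (A, oplus A B)
  | (A, B), LR.R => (oplus A B, B)

/-- The pair (D(a/b), D(c/d)) of unreduced degree sequences of the final pair of a word;
0/1 and 1/1 are both assigned the list [1,1]. -/
def degPair (w : List LR) : List ℕ × List ℕ :=
  w.tail.foldl degStep ([1, 1], [1, 1])

/-- The unreduced degree sequence D(⟨w⟩) = D(a/b) ⊕ D(c/d) of the value of a word. -/
def Dseq (w : List LR) : List ℕ :=
  oplus (degPair w).1 (degPair w).2

/-- Reduction: [k₁,…,k_{q+1}] becomes [k₂,…,k_q, k₁+k_{q+1}]; the last entry is the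
boundary degree and the remaining ones are the inner degrees. -/
def reduce (D : List ℕ) : List ℕ :=
  D.tail.dropLast ++ [D.headD 0 + D.getLastD 0]

/-- The reduced degree sequence of the Haros graph G_{⟨w⟩}. -/
def degSeq (w : List LR) : List ℕ := reduce (Dseq w)

/-- Degree-distribution entropy S of the Haros graph G_{⟨w⟩}:
S = −Σ_k P(k)·ln P(k), summed over the degree values occurring in the reduced
degree sequence, where P(k) = m(k)/q. -/
noncomputable def Sent (w : List LR) : ℝ :=
  -∑ k ∈ (degSeq w).toFinset,
    (((degSeq w).count k : ℝ) / ((value w).2 : ℝ)) *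
      Real.log (((degSeq w).count k : ℝ) / ((value w).2 : ℝ))

/-- Reduced entropy H of the Haros graph G_{⟨w⟩} (with the convention 0·ln 0 = 0,
automatic since Real.log 0 = 0). -/
noncomputable def Hent (w : List LR) : ℝ :=
  let x : ℝ := ((value w).1 : ℝ) / ((value w).2 : ℝ)
  if x ≤ 1 / 2 then
    Sent w + 2 * x * Real.log x + (1 - 2 * x) * Real.log (1 - 2 * x)
  else
    Sent w + 2 * (1 - x) * Real.log (1 - x) + (2 * x - 1) * Real.log (2 * x - 1)


/-! The map `F x = x / (1 + x)` sends the starting pair `(0/1, 1/1)` of the Farey tree to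
`(0/1, 1/2)`, the pair reached after `L L`, and commutes with mediants; hence the Farey path of
`F (p/q)` is `L :: w`. Running the degree-sequence recursion in parallel from `([1,1], [1,1])` and
from `([1,1], [2,2,2])`, every `D(F x)` has the first entry of `D(x)`, a last entry one larger, and
interior entries `≥ 6` that are exactly the interior entries `≥ 5` of `D(x)` raised by one. The
shift breaks only at junctions with the ends `0/1` and `1/1`, where the entries are below these
thresholds. -/

namespace Farey

def Before (x y : ℕ × ℕ) : Prop := x.1 * y.2 < y.1 * x.2

lemma Before.irrefl (x : ℕ × ℕ) : ¬ Before x x := lt_irrefl _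

lemma Before.asymm {x y : ℕ × ℕ} (h : Before x y) : ¬ Before y x := lt_asymm h

lemma Before.add_right {x y : ℕ × ℕ} (h : Before x y) : Before x (x + y) := by
  unfold Before at *; simp only [Prod.fst_add, Prod.snd_add]; nlinarith

lemma Before.add_left {x y : ℕ × ℕ} (h : Before x y) : Before (x + y) y := by
  unfold Before at *; simp only [Prod.fst_add, Prod.snd_add]; nlinarith

lemma fareyStep_L (x y : ℕ × ℕ) : fareyStep (x, y) .L = (x, x + y) := rfl

lemma fareyStep_R (x y : ℕ × ℕ) : fareyStep (x, y) .R = (x + y, y) := rfl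

def valueFrom (t : List LR) (P : (ℕ × ℕ) × (ℕ × ℕ)) : ℕ × ℕ :=
  (t.foldl fareyStep P).1 + (t.foldl fareyStep P).2

lemma value_cons_L (t : List LR) : value (.L :: t) = valueFrom t ((0, 1), (1, 1)) := rfl

lemma valueFrom_cons (s : LR) (t : List LR) (P : (ℕ × ℕ) × (ℕ × ℕ)) :
    valueFrom (s :: t) P = valueFrom t (fareyStep P s) := rfl

lemma valueFrom_between (t : List LR) {x y : ℕ × ℕ} (h : Before x y) :
    Before x (valueFrom t (x, y)) ∧ Before (valueFrom t (x, y)) y := by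
  induction t generalizing x y with
  | nil => exact ⟨h.add_right, h.add_left⟩
  | cons s t ih =>
    cases s with
    | L =>
      rw [valueFrom_cons, fareyStep_L]
      obtain ⟨hx, hxy⟩ := ih h.add_right
      refine ⟨hx, ?_⟩
      unfold Before at *; simp only [Prod.fst_add, Prod.snd_add] at *; nlinarith
    | R =>
      rw [valueFrom_cons, fareyStep_R]
      obtain ⟨hxy, hy⟩ := ih h.add_left
      refine ⟨?_, hy⟩
      unfold Before at *; simp only [Prod.fst_add, Prod.snd_add] at *; nlinarith

lemma valueFrom_cons_L_before {x y : ℕ × ℕ} (h : Before x y) (t : List LR) :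
    Before (valueFrom (.L :: t) (x, y)) (x + y) :=
  (valueFrom_between t h.add_right).2

lemma valueFrom_cons_R_after {x y : ℕ × ℕ} (h : Before x y) (t : List LR) :
    Before (x + y) (valueFrom (.R :: t) (x, y)) :=
  (valueFrom_between t h.add_left).1

/-- The first symbol is read off by comparing the value with the mediant `x + y`. -/
lemma valueFrom_injective {x y : ℕ × ℕ} (h : Before x y) {t t' : List LR}
    (heq : valueFrom t (x, y) = valueFrom t' (x, y)) : t = t' := by
  induction t generalizing t' x y with
  | nil =>
    rcases t' with _ | ⟨_ | _, t'⟩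
    · rfl
    · exact absurd (heq ▸ valueFrom_cons_L_before h t') (Before.irrefl _)
    · exact absurd (heq ▸ valueFrom_cons_R_after h t') (Before.irrefl _)
  | cons s t ih =>
    rcases t' with _ | ⟨_ | _, t'⟩ <;> cases s
    · exact absurd (heq ▸ valueFrom_cons_L_before h t) (Before.irrefl _)
    · exact absurd (heq ▸ valueFrom_cons_R_after h t) (Before.irrefl _)
    · rw [ih h.add_right heq]
    · exact absurd (heq ▸ valueFrom_cons_R_after h t) (valueFrom_cons_L_before h t').asymm
    · exact absurd (heq ▸ valueFrom_cons_L_before h t) (valueFrom_cons_R_after h t').asymm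
    · rw [ih h.add_left heq]

lemma eq_cons_of_isFareyWord {w : List LR} (hw : IsFareyWord w) : ∃ t, w = .L :: t := by
  cases w with
  | nil => cases hw
  | cons s t => cases hw; exact ⟨t, rfl⟩

lemma eq_of_value_eq {w w' : List LR} (hw : IsFareyWord w) (hw' : IsFareyWord w')
    (h : value w = value w') : w = w' := by
  obtain ⟨t, rfl⟩ := eq_cons_of_isFareyWord hw
  obtain ⟨t', rfl⟩ := eq_cons_of_isFareyWord hw'
  rw [value_cons_L, value_cons_L] at h
  rw [valueFrom_injective (show Before (0, 1) (1, 1) from Nat.one_pos) h]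

/-- `(p, q) ↦ (p, p + q)`, i.e. the map `F(x) = x / (1 + x)` on fractions. -/
def divOneAdd (x : ℕ × ℕ) : ℕ × ℕ := (x.1, x.1 + x.2)

lemma divOneAdd_add (x y : ℕ × ℕ) : divOneAdd (x + y) = divOneAdd x + divOneAdd y := by
  ext <;> simp only [divOneAdd, Prod.fst_add, Prod.snd_add]; ring

lemma foldl_fareyStep_map_divOneAdd (t : List LR) (P : (ℕ × ℕ) × (ℕ × ℕ)) :
    t.foldl fareyStep (Prod.map divOneAdd divOneAdd P) =
      Prod.map divOneAdd divOneAdd (t.foldl fareyStep P) := by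
  induction t generalizing P with
  | nil => rfl
  | cons s t ih =>
    have hstep : fareyStep (Prod.map divOneAdd divOneAdd P) s =
        Prod.map divOneAdd divOneAdd (fareyStep P s) := by
      obtain ⟨x, y⟩ := P
      cases s <;> simp only [Prod.map, fareyStep_L, fareyStep_R, divOneAdd_add]
    rw [List.foldl_cons, List.foldl_cons, hstep, ih]

lemma value_cons_L_of_isFareyWord {w : List LR} (hw : IsFareyWord w) :
    value (.L :: w) = divOneAdd (value w) := by
  obtain ⟨t, rfl⟩ := eq_cons_of_isFareyWord hw
  have hstart : fareyStep ((0, 1), (1, 1)) .L = Prod.map divOneAdd divOneAdd ((0, 1), (1, 1)) :=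
    rfl
  rw [value_cons_L, value_cons_L, valueFrom_cons, hstart]
  unfold valueFrom
  rw [foldl_fareyStep_map_divOneAdd]
  exact (divOneAdd_add _ _).symm

end Farey

namespace HarosDegree

def CountShift (m m' : List ℕ) : Prop := ∀ k, 5 ≤ k → m'.count (k + 1) = m.count k

lemma CountShift.append {m m' n n' : List ℕ} (hm : CountShift m m') (hn : CountShift n n') :
    CountShift (m ++ n) (m' ++ n') := fun k hk => by
  rw [List.count_append, List.count_append, hm k hk, hn k hk]

/-- `CountShift [e] [e']` holds exactly when `ShiftOrSmall e e'`. -/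
def ShiftOrSmall (e e' : ℕ) : Prop := e' = e + 1 ∨ (e < 5 ∧ e' < 6)

lemma ShiftOrSmall.countShift {e e' : ℕ} (h : ShiftOrSmall e e') : CountShift [e] [e'] := by
  intro k hk
  simp only [List.count_singleton, beq_iff_eq]
  rcases h with rfl | ⟨he, he'⟩ <;> split_ifs <;> omega

lemma countShift_nil_singleton {e : ℕ} (he : e < 6) : CountShift [] [e] := by
  intro k hk
  simp only [List.count_singleton, List.count_nil, beq_iff_eq]
  split_ifs <;> omega

def ShiftedBy (dh dl : ℕ) (X X' : List ℕ) : Prop :=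
  ∃ x u : ℕ, ∃ m m' : List ℕ,
    X = x :: m ++ [u] ∧ X' = (x + dh) :: m' ++ [u + dl] ∧ CountShift m m'

/-- The relation between `D(x)` and `D(F x)` for `0 < x < 1`. -/
abbrev Shifted : List ℕ → List ℕ → Prop := ShiftedBy 0 1

/-- The relation between the left ancestors of `x` and of `F x`; `F` fixes `0/1`. -/
def ShiftedOrZero (A A' : List ℕ) : Prop := (A = [1, 1] ∧ A' = [1, 1]) ∨ Shifted A A'

/-- The relation between the right ancestors of `x` and of `F x`; `F` maps `1/1` to `1/2`. -/
def ShiftedOrOne (B B' : List ℕ) : Prop := (B = [1, 1] ∧ B' = [2, 2, 2]) ∨ Shifted B B'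

lemma oplus_concat (x u y v : ℕ) (m n : List ℕ) :
    oplus (x :: m ++ [u]) (y :: n ++ [v]) = (x + 1) :: (m ++ (u + y) :: n) ++ [v + 1] := by
  rw [oplus, List.dropLast_concat, List.getLastD_concat, List.getLastD_concat]
  change (x + 1) :: m ++ [u + y] ++ (n ++ [v]).dropLast ++ [v + 1] = _
  rw [List.dropLast_concat]
  simp

lemma headD_oplus (x u : ℕ) (m B : List ℕ) : (oplus (x :: m ++ [u]) B).headD 0 = x + 1 := by
  rw [oplus, List.dropLast_concat]
  rfl

lemma getLastD_oplus (A B : List ℕ) : (oplus A B).getLastD 0 = B.getLastD 0 + 1 :=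
  List.getLastD_concat

lemma ShiftedBy.oplus {dh dl eh el : ℕ} {A A' B B' : List ℕ} (hA : ShiftedBy dh dl A A')
    (hB : ShiftedBy eh el B B')
    (hj : ShiftOrSmall (A.getLastD 0 + B.headD 0) (A'.getLastD 0 + B'.headD 0)) :
    ShiftedBy dh el (oplus A B) (oplus A' B') := by
  obtain ⟨x, u, m, m', rfl, rfl, hm⟩ := hA
  obtain ⟨y, v, n, n', rfl, rfl, hn⟩ := hB
  simp only [List.getLastD_concat] at hj
  refine ⟨x + 1, v + 1, _, _, oplus_concat .., ?_, hm.append (hj.countShift.append hn)⟩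
  rw [oplus_concat, Nat.add_right_comm x, Nat.add_right_comm v]
  rfl

lemma ShiftedOrZero.exists_shiftedBy {A A' : List ℕ} (h : ShiftedOrZero A A') :
    ∃ dl, ShiftedBy 0 dl A A' := by
  rcases h with ⟨rfl, rfl⟩ | h
  · exact ⟨0, 1, 1, [], [], rfl, rfl, fun _ _ => rfl⟩
  · exact ⟨1, h⟩

lemma ShiftedOrOne.exists_shiftedBy {B B' : List ℕ} (h : ShiftedOrOne B B') :
    ∃ dh, ShiftedBy dh 1 B B' := by
  rcases h with ⟨rfl, rfl⟩ | h
  · exact ⟨1, 1, 1, [], [2], rfl, rfl, countShift_nil_singleton (by norm_num)⟩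
  · exact ⟨0, h⟩

lemma shifted_oplus {A A' B B' : List ℕ} (hA : ShiftedOrZero A A') (hB : ShiftedOrOne B B')
    (hj : ShiftOrSmall (A.getLastD 0 + B.headD 0) (A'.getLastD 0 + B'.headD 0)) :
    Shifted (oplus A B) (oplus A' B') := by
  obtain ⟨_, hA⟩ := hA.exists_shiftedBy
  obtain ⟨_, hB⟩ := hB.exists_shiftedBy
  exact hA.oplus hB hj

lemma ShiftedOrZero.shiftOrSmall_oplus {A A' : List ℕ} (h : ShiftedOrZero A A')
    (B B' : List ℕ) :
    ShiftOrSmall (A.getLastD 0 + (oplus A B).headD 0) (A'.getLastD 0 + (oplus A' B').headD 0) := by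
  rcases h with ⟨rfl, rfl⟩ | ⟨x, u, m, m', rfl, rfl, -⟩
  · exact Or.inr ⟨by simp [oplus], by simp [oplus]⟩
  · left
    rw [headD_oplus, headD_oplus, List.getLastD_concat, List.getLastD_concat]
    ring

lemma ShiftedOrOne.shiftOrSmall_oplus {B B' : List ℕ} (h : ShiftedOrOne B B')
    (A A' : List ℕ) :
    ShiftOrSmall ((oplus A B).getLastD 0 + B.headD 0) ((oplus A' B').getLastD 0 + B'.headD 0) := by
  rcases h with ⟨rfl, rfl⟩ | ⟨x, u, m, m', rfl, rfl, -⟩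
  · exact Or.inr ⟨by rw [getLastD_oplus]; decide, by rw [getLastD_oplus]; decide⟩
  · left
    rw [getLastD_oplus, getLastD_oplus, List.getLastD_concat, List.getLastD_concat]
    change u + 1 + 1 + (x + 0) = u + 1 + x + 1
    ring

/-- The last conjunct is needed because `A.getLastD 0 + B.headD 0` becomes an interior entry
of `oplus A B`. -/
def PairShifted (P P' : List ℕ × List ℕ) : Prop :=
  ShiftedOrZero P.1 P'.1 ∧ ShiftedOrOne P.2 P'.2 ∧
    ShiftOrSmall (P.1.getLastD 0 + P.2.headD 0) (P'.1.getLastD 0 + P'.2.headD 0)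

lemma PairShifted.step {P P' : List ℕ × List ℕ} (h : PairShifted P P') (s : LR) :
    PairShifted (degStep P s) (degStep P' s) := by
  obtain ⟨A, B⟩ := P
  obtain ⟨A', B'⟩ := P'
  obtain ⟨hA, hB, hj⟩ := h
  cases s with
  | L => exact ⟨hA, Or.inr (shifted_oplus hA hB hj), hA.shiftOrSmall_oplus B B'⟩
  | R => exact ⟨Or.inr (shifted_oplus hA hB hj), hB, hB.shiftOrSmall_oplus A A'⟩

lemma PairShifted.foldl_degStep {P P' : List ℕ × List ℕ} (h : PairShifted P P') (t : List LR) :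
    PairShifted (t.foldl degStep P) (t.foldl degStep P') := by
  induction t generalizing P P' with
  | nil => exact h
  | cons s t ih => exact ih (h.step s)

lemma shifted_Dseq {w : List LR} (hw : IsFareyWord w) : Shifted (Dseq w) (Dseq (.L :: w)) := by
  obtain ⟨t, rfl⟩ := Farey.eq_cons_of_isFareyWord hw
  have hstart : PairShifted ([1, 1], [1, 1]) ([1, 1], [2, 2, 2]) :=
    ⟨Or.inl ⟨rfl, rfl⟩, Or.inl ⟨rfl, rfl⟩, Or.inl rfl⟩
  obtain ⟨hA, hB, hj⟩ := hstart.foldl_degStep t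
  exact shifted_oplus hA hB hj

lemma reduce_concat (x u : ℕ) (m : List ℕ) : reduce (x :: m ++ [u]) = m ++ [x + u] := by
  change (m ++ [u]).dropLast ++ [x + (x :: m ++ [u]).getLastD 0] = _
  rw [List.dropLast_concat, List.getLastD_concat]

lemma Shifted.count_reduce {X X' : List ℕ} (h : Shifted X X') {k : ℕ} (hk : 5 ≤ k) :
    (reduce X).count k = (reduce X').count (k + 1) := by
  obtain ⟨x, u, m, m', rfl, rfl, hm⟩ := h
  have hends : ShiftOrSmall (x + u) (x + 0 + (u + 1)) := Or.inl (by ring)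
  rw [reduce_concat, reduce_concat]
  exact ((hm.append hends.countShift) k hk).symm

end HarosDegree

theorem statement10_general (p q : ℕ)
    (k : ℕ) (hk : 5 ≤ k) (w w' : List LR) (hw : IsFareyWord w) (hw' : IsFareyWord w')
    (hval : value w = (p, q)) (hval' : value w' = (p, p + q)) :
    (degSeq w).count k = (degSeq w').count (k + 1) := by
  have hvalue : value w' = value (.L :: w) := by
    rw [hval', Farey.value_cons_L_of_isFareyWord hw, hval]
    rfl
  obtain rfl : w' = .L :: w := Farey.eq_of_value_eq hw' rfl hvalue
  exact (HarosDegree.shifted_Dseq hw).count_reduce hk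

/-- for every irreducible fraction p/q ∈ (0,1) and every k ≥ 5,
m(k, p/q) = m(k+1, p/(p+q)), where p/(p+q) = F(p/q) with F(x) = x/(1+x). -/
theorem statement10 (p q : ℕ) (hcop : Nat.Coprime p q) (hp : 0 < p) (hpq : p < q)
    (k : ℕ) (hk : 5 ≤ k) (w w' : List LR) (hw : IsFareyWord w) (hw' : IsFareyWord w')
    (hval : value w = (p, q)) (hval' : value w' = (p, p + q)) :
    (degSeq w).count k = (degSeq w').count (k + 1) :=
  statement10_general p q k hk w w' hw hw' hval hval'
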